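/- arXiv:1204.0248 — 4 statements merged into one kernel-verified Lean document; each statement's English description precedes it below -/
import Mathlib

section
/- Let P be a two-dimensional lattice polytope in ℚ² and v a vertex of P such that the convex hull of (P ∩ ℤ²) \ {v} is still two-dimensional. Then the normalized volume of conv((P ∩ ℤ²) \ {v}) is strictly less than the normalized volume of P. -/
/-
A vertex `v` of `P` does not lie in `conv(P \ {v})`, so it is not in the shaved polygon `Q`,
which is compact as the hull of the finitely many lattice points of `P`. Hence a small
neighbourhood of `v` misses `Q`; since `v` lies in the closure of the interior of the convex
body `P`, this neighbourhood contains a nonempty open subset of `P \ Q`, whose positive area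
makes the area of `Q` strictly smaller.
-/

open MeasureTheory

/-- The points of `ℝ × ℝ` with integer coordinates. -/
def latticePts : Set (ℝ × ℝ) := {p | ∃ v : ℤ × ℤ, p = ((v.1 : ℝ), (v.2 : ℝ))}

open Topology in
lemma isClosedEmbedding_intCast_prod :
    IsClosedEmbedding (fun z : ℤ × ℤ => ((z.1 : ℝ), (z.2 : ℝ))) :=
  Int.isClosedEmbedding_coe_real.prodMap Int.isClosedEmbedding_coe_real

lemma IsCompact.finite_inter_latticePts {K : Set (ℝ × ℝ)} (hK : IsCompact K) :
    (K ∩ latticePts).Finite := by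
  refine ((isClosedEmbedding_intCast_prod.isCompact_preimage hK).finite_of_discrete.image
    (fun z : ℤ × ℤ => ((z.1 : ℝ), (z.2 : ℝ)))).subset ?_
  rintro _ ⟨hpK, z, rfl⟩
  exact ⟨z, hpK, rfl⟩

lemma measure_lt_of_isClosed_of_mem_closure_interior {X : Type*} [TopologicalSpace X]
    [MeasurableSpace X] [OpensMeasurableSpace X] (μ : Measure X) [μ.IsOpenPosMeasure]
    {C K : Set X} {v : X} (hC : IsClosed C) (hCK : C ⊆ K) (hCfin : μ C ≠ ⊤)
    (hv : v ∈ closure (interior K)) (hvC : v ∉ C) : μ C < μ K := by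
  set U := Cᶜ ∩ interior K
  have hUopen : IsOpen U := hC.isOpen_compl.inter isOpen_interior
  have hUne : U.Nonempty := mem_closure_iff.1 hv Cᶜ hC.isOpen_compl hvC
  calc μ C < μ C + μ U := ENNReal.lt_add_right hCfin (hUopen.measure_pos μ hUne).ne'
    _ = μ (C ∪ U) :=
      (measure_union (disjoint_compl_right.mono_right Set.inter_subset_left)
        hUopen.measurableSet).symm
    _ ≤ μ K := measure_mono (Set.union_subset hCK (Set.inter_subset_right.trans interior_subset))

lemma Convex.measure_lt_of_isClosed {E : Type*} [NormedAddCommGroup E] [NormedSpace ℝ E]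
    [MeasurableSpace E] [OpensMeasurableSpace E] (μ : Measure E) [μ.IsOpenPosMeasure]
    {C K : Set E} {v : E} (hK : Convex ℝ K) (hKint : (interior K).Nonempty)
    (hC : IsClosed C) (hCK : C ⊆ K) (hCfin : μ C ≠ ⊤) (hv : v ∈ K) (hvC : v ∉ C) :
    μ C < μ K := by
  refine measure_lt_of_isClosed_of_mem_closure_interior μ hC hCK hCfin ?_ hvC
  rw [hK.closure_interior_eq_closure_of_nonempty_interior hKint]
  exact subset_closure hv

theorem stmt0_general (V : Finset (ℤ × ℤ)) (P : Set (ℝ × ℝ))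
    (hP : P = convexHull ℝ ((fun v : ℤ × ℤ => ((v.1 : ℝ), (v.2 : ℝ))) '' ↑V))
    (hdim : affineSpan ℝ P = ⊤)
    (v : ℝ × ℝ) (hv : v ∈ Set.extremePoints ℝ P)
    (Q : Set (ℝ × ℝ)) (hQ : Q = convexHull ℝ ((P ∩ latticePts) \ {v})) :
    2 * volume Q < 2 * volume P := by
  have hPconv : Convex ℝ P := hP ▸ convex_convexHull ℝ _
  have hPcpt : IsCompact P := hP ▸ (V.finite_toSet.image _).isCompact_convexHull ℝ
  obtain ⟨hvP, hv_notMem⟩ := hPconv.mem_extremePoints_iff_mem_sdiff_convexHull_sdiff.1 hv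
  have hQ_sub : Q ⊆ convexHull ℝ (P \ {v}) :=
    hQ ▸ convexHull_mono (Set.sdiff_subset_sdiff_left Set.inter_subset_left)
  have hQP : Q ⊆ P := hQ_sub.trans (convexHull_min Set.sdiff_subset hPconv)
  have hQclosed : IsClosed Q :=
    hQ ▸ (hPcpt.finite_inter_latticePts.sdiff.isCompact_convexHull ℝ).isClosed
  have hlt : volume Q < volume P :=
    hPconv.measure_lt_of_isClosed volume (hPconv.interior_nonempty_iff_affineSpan_eq_top.2 hdim)
      hQclosed hQP (measure_ne_top_of_subset hQP hPcpt.measure_lt_top.ne) hvP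
      (fun h => hv_notMem (hQ_sub h))
  exact (ENNReal.mul_lt_mul_iff_right two_ne_zero ENNReal.ofNat_ne_top).2 hlt

/-- Shaving a vertex `v` of a two-dimensional lattice polytope `P` strictly decreases
the normalized volume (twice the Euclidean area). -/
theorem stmt0 (V : Finset (ℤ × ℤ)) (P : Set (ℝ × ℝ))
    (hP : P = convexHull ℝ ((fun v : ℤ × ℤ => ((v.1 : ℝ), (v.2 : ℝ))) '' ↑V))
    (hdim : affineSpan ℝ P = ⊤)
    (v : ℝ × ℝ) (hv : v ∈ Set.extremePoints ℝ P)
    (Q : Set (ℝ × ℝ)) (hQ : Q = convexHull ℝ ((P ∩ latticePts) \ {v}))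
    (hQdim : affineSpan ℝ Q = ⊤) :
    2 * volume Q < 2 * volume P :=
  stmt0_general V P hP hdim v hv Q hQ
end

section
/- Every two-dimensional lattice polygon Q contained in the box B_m = [0,m] × [0,m] can be obtained from B_m by a finite sequence of shavings: there exist lattice polygons Q = P⁽⁰⁾ ⊂ P⁽¹⁾ ⊂ ⋯ ⊂ P⁽ⁿ⁾ = B_m such that each P⁽ⁱ⁻¹⁾ is obtained from P⁽ⁱ⁾ by removing one vertex, i.e. P⁽ⁱ⁻¹⁾ = conv((P⁽ⁱ⁾ ∩ ℤ²) \ {vᵢ}) for some vertex vᵢ of P⁽ⁱ⁾. -/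
/-- `Q` is obtained from `P` by shaving the vertex `v`: remove one vertex of `P` from its
set of lattice points and take the convex hull. -/
def Shaves (P Q : Set (ℝ × ℝ)) : Prop :=
  ∃ v ∈ Set.extremePoints ℝ P, Q = convexHull ℝ ((P ∩ latticePts) \ {v})

/-!
Let `A` be the set of lattice points of `B_m` and `V ⊆ A` the vertex set of `Q`. As long as
`conv A ≠ conv V`, Krein–Milman gives a vertex `p` of `conv A` outside `Q`. Since `A` consists of
*all* lattice points of `conv A`, shaving `p` yields `conv (A \ {p})`, whose lattice points are
again exactly `A \ {p}`; induction on `|A|` finishes the argument.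
-/

open Set

theorem Relation.ReflTransGen.exists_relSeries {α : Type*} {r : α → α → Prop} {a b : α}
    (h : Relation.ReflTransGen r a b) :
    ∃ s : RelSeries {p : α × α | r p.1 p.2}, s.head = a ∧ s.last = b := by
  induction h with
  | refl => exact ⟨RelSeries.singleton _ a, rfl, rfl⟩
  | tail _ hcd ih =>
    obtain ⟨s, hs_head, hs_last⟩ := ih
    exact ⟨s.snoc _ (hs_last ▸ hcd), by simpa using hs_head, by simp⟩

theorem IsCompact.subset_of_extremePoints_subset {E : Type*} [AddCommGroup E] [Module ℝ E]
    [TopologicalSpace E] [T2Space E] [IsTopologicalAddGroup E] [ContinuousSMul ℝ E]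
    [LocallyConvexSpace ℝ E] {K C : Set E} (hK : IsCompact K) (hKconv : Convex ℝ K)
    (hC : IsClosed C) (hCconv : Convex ℝ C) (h : K.extremePoints ℝ ⊆ C) : K ⊆ C := by
  rw [← closure_convexHull_extremePoints hK hKconv]
  exact closure_minimal (convexHull_min h hCconv) hC

theorem convexHull_convexHull_inter_of_subset {E : Type*} [AddCommGroup E] [Module ℝ E]
    {C S : Set E} (hC : C ⊆ S) : convexHull ℝ (convexHull ℝ C ∩ S) = convexHull ℝ C :=
  (convexHull_min inter_subset_left (convex_convexHull ℝ C)).antisymm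
    (convexHull_mono (subset_inter (subset_convexHull ℝ C) hC))

theorem Icc_eq_convexHull_corners {x y : ℝ × ℝ} (h : x ≤ y) :
    Icc x y = convexHull ℝ ({x.1, y.1} ×ˢ {x.2, y.2}) := by
  rw [convexHull_prod, convexHull_pair, convexHull_pair, segment_eq_Icc h.1, segment_eq_Icc h.2,
    Icc_prod_Icc]

theorem prod_subset_latticePts {s t : Set ℝ} (hs : s ⊆ range Int.cast)
    (ht : t ⊆ range Int.cast) : s ×ˢ t ⊆ latticePts := by
  rintro ⟨a, b⟩ ⟨ha, hb⟩
  obtain ⟨i, rfl⟩ := hs ha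
  obtain ⟨j, rfl⟩ := ht hb
  exact ⟨(i, j), rfl⟩

theorem finite_Icc_inter_latticePts (x y : ℝ × ℝ) : (Icc x y ∩ latticePts).Finite := by
  refine ((finite_Icc (⌈x.1⌉, ⌈x.2⌉) (⌊y.1⌋, ⌊y.2⌋)).image
    fun v : ℤ × ℤ => ((v.1 : ℝ), (v.2 : ℝ))).subset ?_
  rintro _ ⟨⟨hx, hy⟩, v, rfl⟩
  exact ⟨v, ⟨⟨Int.ceil_le.2 hx.1, Int.ceil_le.2 hx.2⟩,
    ⟨Int.le_floor.2 hy.1, Int.le_floor.2 hy.2⟩⟩, rfl⟩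

def IsLatticeSaturated (A : Set (ℝ × ℝ)) : Prop :=
  convexHull ℝ A ∩ latticePts = A

theorem Convex.isLatticeSaturated_inter {B : Set (ℝ × ℝ)} (hB : Convex ℝ B) :
    IsLatticeSaturated (B ∩ latticePts) :=
  (inter_subset_inter_left _ (convexHull_min inter_subset_left hB)).antisymm
    (subset_inter (subset_convexHull ℝ _) inter_subset_right)

namespace IsLatticeSaturated

variable {A : Set (ℝ × ℝ)} {p : ℝ × ℝ}

theorem shaves (hA : IsLatticeSaturated A) (hp : p ∈ (convexHull ℝ A).extremePoints ℝ) :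
    Shaves (convexHull ℝ A) (convexHull ℝ (A \ {p})) :=
  ⟨p, hp, by rw [hA]⟩

theorem sdiff_singleton (hA : IsLatticeSaturated A)
    (hp : p ∈ (convexHull ℝ A).extremePoints ℝ) : IsLatticeSaturated (A \ {p}) := by
  have hp_notMem : p ∉ convexHull ℝ (A \ {p}) := fun hmem =>
    (((convex_convexHull ℝ A).mem_extremePoints_iff_mem_sdiff_convexHull_sdiff).1 hp).2
      (convexHull_mono (sdiff_subset_sdiff_left (subset_convexHull ℝ A)) hmem)
  refine subset_antisymm ?_ (subset_inter (subset_convexHull ℝ _) ?_)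
  · rintro x ⟨hx, hxL⟩
    refine ⟨hA ▸ ⟨convexHull_mono sdiff_subset hx, hxL⟩, ?_⟩
    rintro rfl
    exact hp_notMem hx
  · exact sdiff_subset.trans (hA ▸ inter_subset_right)

end IsLatticeSaturated

theorem IsLatticeSaturated.reflTransGen_shaves {A V : Set (ℝ × ℝ)} (hA : IsLatticeSaturated A)
    (hAfin : A.Finite) (hVfin : V.Finite) (hVA : V ⊆ A) :
    Relation.ReflTransGen (fun P P' => Shaves P' P) (convexHull ℝ V) (convexHull ℝ A) := by
  by_cases hext : (convexHull ℝ A).extremePoints ℝ ⊆ convexHull ℝ V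
  · have hAV : convexHull ℝ A ⊆ convexHull ℝ V :=
      (hAfin.isCompact_convexHull ℝ).subset_of_extremePoints_subset (convex_convexHull ℝ A)
        (hVfin.isCompact_convexHull ℝ).isClosed (convex_convexHull ℝ V) hext
    rw [hAV.antisymm (convexHull_mono hVA)]
  · obtain ⟨p, hp, hpV⟩ := not_subset.1 hext
    have hpA : p ∈ A := extremePoints_convexHull_subset hp
    have hVA' : V ⊆ A \ {p} := fun v hv =>
      ⟨hVA hv, by rintro rfl; exact hpV (subset_convexHull ℝ V hv)⟩
    exact (reflTransGen_shaves (hA.sdiff_singleton hp) hAfin.sdiff hVfin hVA').tail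
      (hA.shaves hp)
termination_by A.ncard
decreasing_by exact ncard_sdiff_singleton_lt_of_mem hpA hAfin

theorem stmt1_general (m : ℕ)
    (B : Set (ℝ × ℝ)) (hB : B = Set.Icc ((0 : ℝ), (0 : ℝ)) ((m : ℝ), (m : ℝ)))
    (V : Finset (ℤ × ℤ)) (Q : Set (ℝ × ℝ))
    (hQ : Q = convexHull ℝ ((fun v : ℤ × ℤ => ((v.1 : ℝ), (v.2 : ℝ))) '' ↑V))
    (hQB : Q ⊆ B) :
    ∃ (n : ℕ) (P : Fin (n + 1) → Set (ℝ × ℝ)),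
      P 0 = Q ∧ P (Fin.last n) = B ∧
      ∀ i : Fin n, Shaves (P i.succ) (P i.castSucc) := by
  subst hQ
  have hcorners : ({0, (m : ℝ)} : Set ℝ) ⊆ range Int.cast :=
    insert_subset_iff.2 ⟨⟨0, Int.cast_zero⟩, singleton_subset_iff.2 ⟨m, Int.cast_natCast m⟩⟩
  have hB_hull : convexHull ℝ (B ∩ latticePts) = B := by
    rw [hB, Icc_eq_convexHull_corners (by simp)]
    exact convexHull_convexHull_inter_of_subset (prod_subset_latticePts hcorners hcorners)
  have hBfin : (B ∩ latticePts).Finite := hB ▸ finite_Icc_inter_latticePts _ _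
  have hBconv : Convex ℝ B := hB ▸ convex_Icc _ _
  have hVA : (fun v : ℤ × ℤ => ((v.1 : ℝ), (v.2 : ℝ))) '' ↑V ⊆ B ∩ latticePts := by
    rintro _ ⟨v, hv, rfl⟩
    exact ⟨hQB (subset_convexHull ℝ _ ⟨v, hv, rfl⟩), v, rfl⟩
  obtain ⟨s, hs_head, hs_last⟩ := (hBconv.isLatticeSaturated_inter.reflTransGen_shaves hBfin
    (V.finite_toSet.image _) hVA).exists_relSeries
  exact ⟨s.length, s, hs_head, hB_hull ▸ hs_last, s.step⟩

/-- Every two-dimensional lattice polygon contained in the box `[0,m] × [0,m]` can be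
obtained from the box by a finite sequence of shavings. -/
theorem stmt1 (m : ℕ) (hm : 0 < m)
    (B : Set (ℝ × ℝ)) (hB : B = Set.Icc ((0 : ℝ), (0 : ℝ)) ((m : ℝ), (m : ℝ)))
    (V : Finset (ℤ × ℤ)) (Q : Set (ℝ × ℝ))
    (hQ : Q = convexHull ℝ ((fun v : ℤ × ℤ => ((v.1 : ℝ), (v.2 : ℝ))) '' ↑V))
    (hdim : affineSpan ℝ Q = ⊤)
    (hQB : Q ⊆ B) :
    ∃ (n : ℕ) (P : Fin (n + 1) → Set (ℝ × ℝ)),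
      P 0 = Q ∧ P (Fin.last n) = B ∧
      ∀ i : Fin n, Shaves (P i.succ) (P i.castSucc) :=
  stmt1_general m B hB V Q hQ hQB
end

section
/- If P is a lattice polygon in ℚ² and w denotes its lattice width in the direction of the dual vector e₁* (i.e., w = max over p ∈ P of the first coordinate minus the min over p ∈ P of the first coordinate), and D is the closed disc in the dual space centered at the origin of radius w/d, where d is the width in direction e₁* of the largest disc centered at the centroid of the vertices of P and contained in P, then for every primitive lattice vector u in ℤ² outside D, the width of P in direction u is strictly greater than w. -/
/-!
A disc of radius `r` centred at the origin has width `2 r ‖u‖` in every direction `u`, and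
width is monotone under inclusion. Hence `width_u(P) ≥ 2 r ‖u‖ = d ‖u‖`, which exceeds
`d · (w / d) = w` as soon as `‖u‖ > w / d`.
-/

/-- The width of a set `S ⊆ ℝ²` in the direction of the dual vector `u`. -/
noncomputable def wdth (u : ℝ × ℝ) (S : Set (ℝ × ℝ)) : ℝ :=
  sSup ((fun p => u.1 * p.1 + u.2 * p.2) '' S) - sInf ((fun p => u.1 * p.1 + u.2 * p.2) '' S)

/-- The closed Euclidean disc of radius `r` centred at the origin of `ℝ²`. -/
def Disc (r : ℝ) : Set (ℝ × ℝ) := {p | p.1 ^ 2 + p.2 ^ 2 ≤ r ^ 2}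

lemma wdth_mono {u : ℝ × ℝ} {S T : Set (ℝ × ℝ)} (hST : S ⊆ T) (hS : S.Nonempty)
    (hT : Bornology.IsBounded T) : wdth u S ≤ wdth u T := by
  have hf : Continuous fun p : ℝ × ℝ => u.1 * p.1 + u.2 * p.2 := by fun_prop
  have hTc : IsCompact (closure T) := hT.isCompact_closure
  have hTim := Set.image_mono (f := fun p : ℝ × ℝ => u.1 * p.1 + u.2 * p.2) hST
  have hSne := hS.image (fun p : ℝ × ℝ => u.1 * p.1 + u.2 * p.2)
  have hA := (hTc.bddAbove_image hf.continuousOn).mono (Set.image_mono subset_closure)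
  have hB := (hTc.bddBelow_image hf.continuousOn).mono (Set.image_mono subset_closure)
  exact sub_le_sub (csSup_le_csSup hA hSne hTim) (csInf_le_csInf hB hSne hTim)

lemma abs_dot_le_of_mem_disc {u p : ℝ × ℝ} {r : ℝ} (hr : 0 ≤ r) (hp : p ∈ Disc r) :
    |u.1 * p.1 + u.2 * p.2| ≤ r * √(u.1 ^ 2 + u.2 ^ 2) := by
  have hn := Real.sq_sqrt (show 0 ≤ u.1 ^ 2 + u.2 ^ 2 by positivity)
  have hp' : p.1 ^ 2 + p.2 ^ 2 ≤ r ^ 2 := hp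
  refine abs_le_of_sq_le_sq ?_ (by positivity)
  -- Cauchy–Schwarz: `(u·p)² + (u₁p₂ - u₂p₁)² = ‖u‖² ‖p‖²`.
  nlinarith [sq_nonneg (u.1 * p.2 - u.2 * p.1), mul_le_mul_of_nonneg_left hp' (sq_nonneg u.1),
    mul_le_mul_of_nonneg_left hp' (sq_nonneg u.2)]

lemma exists_mem_disc_dot_eq (u : ℝ × ℝ) (r : ℝ) :
    ∃ p ∈ Disc r, u.1 * p.1 + u.2 * p.2 = r * √(u.1 ^ 2 + u.2 ^ 2) := by
  rcases (Real.sqrt_nonneg (u.1 ^ 2 + u.2 ^ 2)).eq_or_lt with hn | hn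
  · exact ⟨0, by simp [Disc]; positivity, by simp [← hn]⟩
  set n := √(u.1 ^ 2 + u.2 ^ 2)
  have hn2 : n ^ 2 = u.1 ^ 2 + u.2 ^ 2 := Real.sq_sqrt (by positivity)
  refine ⟨(r * u.1 / n, r * u.2 / n), ?_, ?_⟩
  · change (r * u.1 / n) ^ 2 + (r * u.2 / n) ^ 2 ≤ r ^ 2
    field_simp
    rw [← hn2]
  · field_simp
    rw [← hn2]

lemma wdth_disc (u : ℝ × ℝ) {r : ℝ} (hr : 0 ≤ r) :
    wdth u (Disc r) = 2 * r * √(u.1 ^ 2 + u.2 ^ 2) := by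
  set f := fun p : ℝ × ℝ => u.1 * p.1 + u.2 * p.2
  obtain ⟨p, hp, hfp⟩ := exists_mem_disc_dot_eq u r
  have hneg : -p ∈ Disc r := by simpa [Disc] using hp
  have hsup : IsGreatest (f '' Disc r) (r * √(u.1 ^ 2 + u.2 ^ 2)) :=
    ⟨⟨p, hp, hfp⟩, by
      rintro _ ⟨q, hq, rfl⟩
      exact (abs_le.mp (abs_dot_le_of_mem_disc hr hq)).2⟩
  have hinf : IsLeast (f '' Disc r) (-(r * √(u.1 ^ 2 + u.2 ^ 2))) :=
    ⟨⟨-p, hneg, by simp only [f, Prod.fst_neg, Prod.snd_neg]; linarith⟩, by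
      rintro _ ⟨q, hq, rfl⟩
      exact (abs_le.mp (abs_dot_le_of_mem_disc hr hq)).1⟩
  rw [wdth, hsup.csSup_eq, hinf.csInf_eq]
  ring

lemma mul_norm_le_wdth_of_disc_subset (u : ℝ × ℝ) {r : ℝ} (hr : 0 ≤ r) {P : Set (ℝ × ℝ)}
    (hP : Bornology.IsBounded P) (hdisc : Disc r ⊆ P) :
    2 * r * √(u.1 ^ 2 + u.2 ^ 2) ≤ wdth u P := by
  rw [← wdth_disc u hr]
  exact wdth_mono hdisc ⟨0, by simp [Disc]; positivity⟩ hP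

theorem stmt2_general (V : Finset (ℤ × ℤ)) (t : ℝ × ℝ)
    (P : Set (ℝ × ℝ))
    (hP : P = convexHull ℝ ((fun v : ℤ × ℤ => ((v.1 : ℝ) + t.1, (v.2 : ℝ) + t.2)) '' ↑V))
    (w : ℝ)
    (r : ℝ) (hr : 0 < r) (hball : Disc r ⊆ P)
    (d : ℝ) (hd : d = wdth (1, 0) (Disc r)) :
    ∀ u : ℤ × ℤ, Int.gcd u.1 u.2 = 1 →
      (((u.1 : ℝ), (u.2 : ℝ)) : ℝ × ℝ) ∉ Disc (w / d) →
      wdth ((u.1 : ℝ), (u.2 : ℝ)) P > w := by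
  intro u _ hu
  set n := √((u.1 : ℝ) ^ 2 + (u.2 : ℝ) ^ 2)
  have hPb : Bornology.IsBounded P :=
    hP ▸ ((V.finite_toSet.image _).isCompact_convexHull ℝ).isBounded
  have hd2 : d = 2 * r := by simp [hd, wdth_disc _ hr.le]
  have hlt : w / d < n := by
    have hsq : (w / d) ^ 2 < n ^ 2 := by
      rw [Real.sq_sqrt (by positivity)]
      simpa [Disc] using hu
    exact (le_abs_self _).trans_lt (abs_lt_of_sq_lt_sq hsq (Real.sqrt_nonneg _))
  calc w = d * (w / d) := by field_simp [hd2, hr.ne']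
    _ < 2 * r * n := by rw [← hd2]; gcongr; linarith
    _ ≤ wdth ((u.1 : ℝ), (u.2 : ℝ)) P :=
      mul_norm_le_wdth_of_disc_subset ((u.1 : ℝ), (u.2 : ℝ)) hr.le hPb hball

/-- Let `P` be (a translate of) a two-dimensional lattice polygon, translated so that the
centroid of its vertices is at the origin.  Let `w` be the width of `P` in the direction
`e₁* = (1,0)`, let `C` be the largest disc centred at the origin contained in `P` and let
`d` be the width of `C` in direction `e₁*`.  Then every primitive lattice vector `u` lying
outside the disc of radius `w/d` in the dual space satisfies `width_u(P) > w`. -/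
theorem stmt2 (V : Finset (ℤ × ℤ)) (hV : V.Nonempty) (t : ℝ × ℝ)
    (P : Set (ℝ × ℝ))
    (hP : P = convexHull ℝ ((fun v : ℤ × ℤ => ((v.1 : ℝ) + t.1, (v.2 : ℝ) + t.2)) '' ↑V))
    (hdim : affineSpan ℝ P = ⊤)
    (hvert : ∀ v ∈ V, ((v.1 : ℝ) + t.1, (v.2 : ℝ) + t.2) ∈ Set.extremePoints ℝ P)
    (hcent : (∑ v ∈ V, (((v.1 : ℝ) + t.1, (v.2 : ℝ) + t.2) : ℝ × ℝ)) = 0)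
    (w : ℝ) (hw : w = wdth (1, 0) P)
    (r : ℝ) (hr : 0 < r) (hball : Disc r ⊆ P)
    (hmax : ∀ r' : ℝ, Disc r' ⊆ P → r' ≤ r)
    (d : ℝ) (hd : d = wdth (1, 0) (Disc r)) :
    ∀ u : ℤ × ℤ, Int.gcd u.1 u.2 = 1 →
      (((u.1 : ℝ), (u.2 : ℝ)) : ℝ × ℝ) ∉ Disc (w / d) →
      wdth ((u.1 : ℝ), (u.2 : ℝ)) P > w :=
  stmt2_general V t P hP w r hr hball d hd
end

section
/- Every two-dimensional lattice polygon contained in the square [0,2] × [0,2] has at most 6 vertices, and up to affine unimodular equivalence the hexagon with vertices (1,0), (2,0), (2,1), (1,2), (0,2), (0,1) is the unique such polygon with exactly 6 vertices. -/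
/-!
A vertex of a lattice polygon in `[0,2]²` is a lattice point of the `3 × 3` grid, and it is not
the midpoint of two other lattice points of the polygon. So the vertex set is a subset of the
grid without three-term arithmetic progressions. A finite check shows that such a subset has at
most `6` points, and that the only ones with `6` are the hexagon and its mirror image under
`x ↦ 2 - x`. Since a polygon is the convex hull of its vertices, the hexagonal case follows.
-/

/-- The embedding `ℤ² → ℝ²`. -/
def i2r (v : ℤ × ℤ) : ℝ × ℝ := ((v.1 : ℝ), (v.2 : ℝ))

/-- The linear map of `ℝ²` determined by an integer `2 × 2` matrix. -/
def matAct (A : Matrix (Fin 2) (Fin 2) ℤ) (p : ℝ × ℝ) : ℝ × ℝ :=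
  ((A 0 0 : ℝ) * p.1 + (A 0 1 : ℝ) * p.2, (A 1 0 : ℝ) * p.1 + (A 1 1 : ℝ) * p.2)

/-- Affine unimodular equivalence of subsets of `ℝ²`. -/
def AffUniEquiv (P P' : Set (ℝ × ℝ)) : Prop :=
  ∃ (u : ℤ × ℤ) (A : Matrix (Fin 2) (Fin 2) ℤ), IsUnit A.det ∧
    P' = matAct A '' ((fun p => p - i2r u) '' P)

def grid3x3 : Finset (ℤ × ℤ) := ({0, 1, 2} : Finset ℤ) ×ˢ ({0, 1, 2} : Finset ℤ)

def hexagon : Finset (ℤ × ℤ) := {(1, 0), (2, 0), (2, 1), (1, 2), (0, 2), (0, 1)}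

def hexagon' : Finset (ℤ × ℤ) := {(0, 0), (1, 0), (2, 1), (2, 2), (1, 2), (0, 1)}

lemma threeAPFree_subset_grid3x3 : ∀ S ∈ grid3x3.powerset, ThreeAPFree (S : Set (ℤ × ℤ)) →
    S.card ≤ 6 ∧ (S.card = 6 → S = hexagon ∨ S = hexagon') := by
  decide +kernel

lemma i2r_injective : Function.Injective i2r := by
  rintro ⟨a₁, a₂⟩ ⟨b₁, b₂⟩ h
  simp only [i2r, Prod.ext_iff] at h ⊢
  exact_mod_cast h

lemma i2r_add (a b : ℤ × ℤ) : i2r (a + b) = i2r a + i2r b := by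
  simp [i2r]

lemma mem_grid3x3_of_i2r_mem_Icc {v : ℤ × ℤ} (h : i2r v ∈ Set.Icc ((0 : ℝ), (0 : ℝ)) (2, 2)) :
    v ∈ grid3x3 := by
  obtain ⟨⟨h₁, h₂⟩, h₃, h₄⟩ := h
  simp only [i2r] at h₁ h₂ h₃ h₄
  have : 0 ≤ v.1 ∧ 0 ≤ v.2 ∧ v.1 ≤ 2 ∧ v.2 ≤ 2 :=
    ⟨by exact_mod_cast h₁, by exact_mod_cast h₂, by exact_mod_cast h₃, by exact_mod_cast h₄⟩
  simp only [grid3x3, Finset.mem_product, Finset.mem_insert, Finset.mem_singleton]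
  omega

lemma threeAPFree_preimage_extremePoints (P : Set (ℝ × ℝ)) :
    ThreeAPFree (i2r ⁻¹' Set.extremePoints ℝ P) := by
  intro a ha m hm b hb hsum
  have hmid : i2r m ∈ openSegment ℝ (i2r a) (i2r b) := by
    refine ⟨1 / 2, 1 / 2, by norm_num, by norm_num, by norm_num, ?_⟩
    rw [← smul_add, ← i2r_add, hsum, i2r_add, ← two_smul ℝ (i2r m), smul_smul]
    norm_num
  exact i2r_injective ((mem_extremePoints.1 hm).2 _ ha.1 _ hb.1 hmid).1

lemma exists_finset_extremePoints_convexHull (V : Finset (ℤ × ℤ)) :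
    ∃ E : Finset (ℤ × ℤ), Set.extremePoints ℝ (convexHull ℝ (i2r '' ↑V)) = i2r '' ↑E := by
  obtain ⟨E, hEV, hE⟩ := Set.subset_image_iff.1
    (extremePoints_convexHull_subset (𝕜 := ℝ) (A := i2r '' ↑V))
  exact ⟨(V.finite_toSet.subset hEV).toFinset, by rw [← hE, Set.Finite.coe_toFinset]⟩

lemma convexHull_extremePoints_convexHull {s : Set (ℝ × ℝ)} (hs : s.Finite) :
    convexHull ℝ (Set.extremePoints ℝ (convexHull ℝ s)) = convexHull ℝ s := by
  have hE : (Set.extremePoints ℝ (convexHull ℝ s)).Finite :=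
    hs.subset extremePoints_convexHull_subset
  rw [← (hE.isClosed_convexHull ℝ).closure_eq]
  exact closure_convexHull_extremePoints (hs.isCompact_convexHull ℝ) (convex_convexHull ℝ s)

lemma isLinearMap_matAct (A : Matrix (Fin 2) (Fin 2) ℤ) : IsLinearMap ℝ (matAct A) where
  map_add p q := by
    simp only [matAct, Prod.fst_add, Prod.snd_add, Prod.mk_add_mk]
    congr 1 <;> ring
  map_smul c p := by
    simp only [matAct, Prod.smul_fst, Prod.smul_snd, Prod.smul_mk, smul_eq_mul]
    congr 1 <;> ring

lemma affUniEquiv_convexHull {S T : Set (ℝ × ℝ)} (u : ℤ × ℤ) (A : Matrix (Fin 2) (Fin 2) ℤ)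
    (hA : IsUnit A.det) (h : matAct A '' ((fun p => p - i2r u) '' S) = T) :
    AffUniEquiv (convexHull ℝ S) (convexHull ℝ T) := by
  refine ⟨u, A, hA, ?_⟩
  have hsub : (fun p => p - i2r u) '' convexHull ℝ S = convexHull ℝ ((fun p => p - i2r u) '' S) :=
    (AffineMap.id ℝ (ℝ × ℝ) - AffineMap.const ℝ (ℝ × ℝ) (i2r u)).image_convexHull S
  rw [hsub, (isLinearMap_matAct A).image_convexHull, h]

lemma image_hexagon :
    matAct 1 '' ((fun p => p - i2r 0) '' (i2r '' ↑hexagon)) =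
      {((1 : ℝ), (0 : ℝ)), ((2 : ℝ), (0 : ℝ)), ((2 : ℝ), (1 : ℝ)),
        ((1 : ℝ), (2 : ℝ)), ((0 : ℝ), (2 : ℝ)), ((0 : ℝ), (1 : ℝ))} := by
  simp [hexagon, matAct, i2r, Set.image_insert_eq]

lemma image_hexagon' :
    matAct !![-1, 0; 0, 1] '' ((fun p => p - i2r (2, 0)) '' (i2r '' ↑hexagon')) =
      {((1 : ℝ), (0 : ℝ)), ((2 : ℝ), (0 : ℝ)), ((2 : ℝ), (1 : ℝ)),
        ((1 : ℝ), (2 : ℝ)), ((0 : ℝ), (2 : ℝ)), ((0 : ℝ), (1 : ℝ))} := by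
  ext x
  norm_num [hexagon', matAct, i2r, Set.image_insert_eq]
  tauto

/-- Every two-dimensional lattice polygon in `[0,2]²` has at most `6` vertices, and the
hexagon with vertices `(1,0)`, `(2,0)`, `(2,1)`, `(1,2)`, `(0,2)`, `(0,1)` is, up to affine
unimodular equivalence, the unique one with exactly `6`. -/
theorem stmt11 (H : Set (ℝ × ℝ))
    (hH : H = convexHull ℝ
      {((1 : ℝ), (0 : ℝ)), ((2 : ℝ), (0 : ℝ)), ((2 : ℝ), (1 : ℝ)),
        ((1 : ℝ), (2 : ℝ)), ((0 : ℝ), (2 : ℝ)), ((0 : ℝ), (1 : ℝ))}) :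
    ∀ (V : Finset (ℤ × ℤ)) (P : Set (ℝ × ℝ)),
      P = convexHull ℝ (i2r '' ↑V) →
      affineSpan ℝ P = ⊤ →
      P ⊆ Set.Icc ((0 : ℝ), (0 : ℝ)) ((2 : ℝ), (2 : ℝ)) →
      (Set.extremePoints ℝ P).ncard ≤ 6 ∧
        ((Set.extremePoints ℝ P).ncard = 6 → AffUniEquiv P H) := by
  intro V P hP _ hPbox
  obtain ⟨E, hE⟩ := exists_finset_extremePoints_convexHull V
  rw [← hP] at hE
  have hEgrid : E ∈ grid3x3.powerset := Finset.mem_powerset.2 fun v hv =>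
    mem_grid3x3_of_i2r_mem_Icc (hPbox (extremePoints_subset (hE ▸ Set.mem_image_of_mem i2r hv)))
  have hEfree : ThreeAPFree (E : Set (ℤ × ℤ)) :=
    (threeAPFree_preimage_extremePoints P).mono (by rw [hE, Set.preimage_image_eq _ i2r_injective])
  have hcard : (Set.extremePoints ℝ P).ncard = E.card := by
    rw [hE, Set.ncard_image_of_injective _ i2r_injective, Set.ncard_coe_finset]
  obtain ⟨hle, hsix⟩ := threeAPFree_subset_grid3x3 E hEgrid hEfree
  refine ⟨hcard ▸ hle, fun h6 => ?_⟩
  have hPE : P = convexHull ℝ (i2r '' ↑E) := by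
    rw [← hE, hP, convexHull_extremePoints_convexHull (V.finite_toSet.image i2r)]
  rw [hPE, hH]
  rcases hsix (hcard ▸ h6) with rfl | rfl
  · exact affUniEquiv_convexHull 0 1 (by simp) image_hexagon
  · exact affUniEquiv_convexHull (2, 0) !![-1, 0; 0, 1] (by simp [Matrix.det_fin_two_of])
      image_hexagon'
end
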